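/- Let f : ℝ → ℝ be a convex piecewise affine function expressed as the maximum of finitely many affine functions. Then the PALB subdivision iteration — starting from a < b with max ∂f(a) < 0 < min ∂f(b), repeatedly computing the intersection ξ of the endpoint supporting lines and replacing the endpoint whose subgradient sign matches sign(∂f(ξ)) — terminates with a point ξ with 0 ∈ ∂f(ξ) after at most |I| iterations, where |I| is the number of affine pieces. -/

import Mathlib

def SubdifferentialAt (f : ℝ → ℝ) (a : ℝ) : Set ℝ :=
  {g : ℝ | ∀ x : ℝ, f a + g * (x - a) ≤ f x}

/-!
At each point the subdifferential of a maximum of affine pieces is the interval between the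
least and the greatest slope of the pieces active there. The slopes `g_a = max ∂f(a) < 0` and
`g_b = min ∂f(b) > 0` at the endpoints move strictly inward at every step: were the greatest
subgradient at `ξ` at most `g_a`, then `f` would agree at `ξ` with both supporting lines, which
makes `g_b` a subgradient at `ξ`. Hence each step that does not stop turns a piece whose slope
lay strictly between `g_a` and `g_b` into an endpoint slope; initially there are fewer than `|I|`
such pieces, since the slope `g_a` itself is one of the `s i`.
-/

open Filter Topology

theorem convex_subdifferentialAt (f : ℝ → ℝ) (x : ℝ) :
    Convex ℝ (SubdifferentialAt f x) := by
  intro g₁ hg₁ g₂ hg₂ t u ht hu htu z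
  have h₁ := mul_le_mul_of_nonneg_left (hg₁ z) ht
  have h₂ := mul_le_mul_of_nonneg_left (hg₂ z) hu
  calc f x + (t • g₁ + u • g₂) * (z - x)
      = t * (f x + g₁ * (z - x)) + u * (f x + g₂ * (z - x)) := by
        simp only [smul_eq_mul]; linear_combination (-f x) * htu
    _ ≤ t * f z + u * f z := add_le_add h₁ h₂
    _ = f z := by linear_combination f z * htu

section Crossing

variable {f : ℝ → ℝ} {x y ξ g g' h : ℝ}

theorem mem_subdifferentialAt_of_eq (hg : g ∈ SubdifferentialAt f x)
    (hy : f y = f x + g * (y - x)) : g ∈ SubdifferentialAt f y := by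
  intro z
  have := hg z
  rw [hy]
  linarith

theorem lt_of_isGreatest_subdifferentialAt_of_crossing (hg : g ∈ SubdifferentialAt f x)
    (hg' : g' ∈ SubdifferentialAt f y) (hlt : g < g')
    (hξ : f x + g * (ξ - x) = f y + g' * (ξ - y)) (hh : IsGreatest (SubdifferentialAt f ξ) h) :
    g < h := by
  by_contra! hle
  have hxξ : x ≤ ξ := by nlinarith [hg' x]
  have hfξ : f ξ = f x + g * (ξ - x) := by nlinarith [hg ξ, hh.1 x]
  have := hh.2 (mem_subdifferentialAt_of_eq hg' (hfξ.trans hξ))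
  linarith

theorem lt_of_isLeast_subdifferentialAt_of_crossing (hg : g ∈ SubdifferentialAt f x)
    (hg' : g' ∈ SubdifferentialAt f y) (hlt : g < g')
    (hξ : f x + g * (ξ - x) = f y + g' * (ξ - y)) (hh : IsLeast (SubdifferentialAt f ξ) h) :
    h < g' := by
  by_contra! hle
  have hξy : ξ ≤ y := by nlinarith [hg y]
  have hfξ : f ξ = f y + g' * (ξ - y) := by nlinarith [hg' ξ, hh.1 y]
  have := hh.2 (mem_subdifferentialAt_of_eq hg (hfξ.trans hξ.symm))
  linarith

end Crossing

section MaxAffine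

variable {ι : Type*} [Fintype ι] [Nonempty ι] {s c : ι → ℝ} {f : ℝ → ℝ}

theorem piece_le_of_eq_sup'
    (hf : ∀ x, f x = Finset.univ.sup' Finset.univ_nonempty (fun i => s i * x + c i))
    (i : ι) (x : ℝ) : s i * x + c i ≤ f x :=
  (hf x).symm ▸ Finset.le_sup' (fun i => s i * x + c i) (Finset.mem_univ i)

theorem slope_mem_subdifferentialAt_of_eq_sup'
    (hf : ∀ x, f x = Finset.univ.sup' Finset.univ_nonempty (fun i => s i * x + c i))
    {i : ι} {x : ℝ} (hi : s i * x + c i = f x) : s i ∈ SubdifferentialAt f x := by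
  intro z
  have := piece_le_of_eq_sup' hf i z
  linarith

theorem active_nonempty_of_eq_sup'
    (hf : ∀ x, f x = Finset.univ.sup' Finset.univ_nonempty (fun i => s i * x + c i)) (x : ℝ) :
    (Finset.univ.filter fun i => s i * x + c i = f x).Nonempty := by
  obtain ⟨i, -, hi⟩ := Finset.exists_mem_eq_sup' Finset.univ_nonempty (fun i => s i * x + c i)
  exact ⟨i, by simp [hf, hi]⟩

/-- For small `t > 0` only the pieces active at `x` matter, so `f (x + t * d) ≤ f x + M * t`. -/
theorem mul_le_of_mem_subdifferentialAt_of_eq_sup'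
    (hf : ∀ x, f x = Finset.univ.sup' Finset.univ_nonempty (fun i => s i * x + c i))
    {x g d M : ℝ} (hM : ∀ i, s i * x + c i = f x → s i * d ≤ M)
    (hg : g ∈ SubdifferentialAt f x) : g * d ≤ M := by
  have hpiece : ∀ i, ∀ᶠ t in 𝓝[>] (0 : ℝ), s i * (x + t * d) + c i ≤ f x + M * t := by
    intro i
    by_cases hact : s i * x + c i = f x
    · filter_upwards [self_mem_nhdsWithin] with t (ht : 0 < t)
      nlinarith [hM i hact]
    · have hlt : s i * x + c i < f x := (piece_le_of_eq_sup' hf i x).lt_of_ne hact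
      have hcont : Tendsto (fun t => s i * (x + t * d) + c i - M * t) (𝓝 0)
          (𝓝 (s i * x + c i)) := by
        convert (by fun_prop : Continuous fun t => s i * (x + t * d) + c i - M * t).tendsto 0
          using 2
        ring
      filter_upwards [nhdsWithin_le_nhds (hcont.eventually (eventually_le_nhds hlt))] with t ht
      linarith
  have hmove : ∀ᶠ t in 𝓝[>] (0 : ℝ), f (x + t * d) ≤ f x + M * t := by
    filter_upwards [eventually_all.2 hpiece] with t ht
    rw [hf]
    exact Finset.sup'_le _ _ fun i _ => ht i
  obtain ⟨t, ht, htpos : 0 < t⟩ := (hmove.and self_mem_nhdsWithin).exists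
  nlinarith [hg (x + t * d)]

theorem exists_isGreatest_subdifferentialAt_of_eq_sup'
    (hf : ∀ x, f x = Finset.univ.sup' Finset.univ_nonempty (fun i => s i * x + c i)) (x : ℝ) :
    ∃ i, IsGreatest (SubdifferentialAt f x) (s i) := by
  obtain ⟨i, hi, hmax⟩ := Finset.exists_max_image _ s (active_nonempty_of_eq_sup' hf x)
  refine ⟨i, slope_mem_subdifferentialAt_of_eq_sup' hf (Finset.mem_filter.1 hi).2,
    fun g hg => ?_⟩
  simpa using mul_le_of_mem_subdifferentialAt_of_eq_sup' hf (d := 1)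
    (fun j hj => by simpa using hmax j (by simp [hj])) hg

theorem exists_isLeast_subdifferentialAt_of_eq_sup'
    (hf : ∀ x, f x = Finset.univ.sup' Finset.univ_nonempty (fun i => s i * x + c i)) (x : ℝ) :
    ∃ i, IsLeast (SubdifferentialAt f x) (s i) := by
  obtain ⟨i, hi, hmin⟩ := Finset.exists_min_image _ s (active_nonempty_of_eq_sup' hf x)
  refine ⟨i, slope_mem_subdifferentialAt_of_eq_sup' hf (Finset.mem_filter.1 hi).2,
    fun g hg => ?_⟩
  have := mul_le_of_mem_subdifferentialAt_of_eq_sup' hf (d := -1) (M := -s i)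
    (fun j hj => by simpa using hmin j (by simp [hj])) hg
  linarith

end MaxAffine

section PALB

variable {ι : Type*} [Fintype ι] {s : ι → ℝ}

noncomputable def piecesBetween (s : ι → ℝ) (l u : ℝ) : Finset ι :=
  Finset.univ.filter fun i => l < s i ∧ s i < u

theorem piecesBetween_ssubset {l l' u u' : ℝ} (hl : l ≤ l') (hu : u' ≤ u) {i : ι}
    (hi : l < s i ∧ s i < u) (hi' : ¬(l' < s i ∧ s i < u')) :
    piecesBetween s l' u' ⊂ piecesBetween s l u := by
  have hsub : piecesBetween s l' u' ⊆ piecesBetween s l u :=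
    Finset.monotone_filter_right _ fun _ _ hj => ⟨hl.trans_lt hj.1, hj.2.trans_le hu⟩
  exact (Finset.ssubset_iff_of_subset hsub).2 ⟨i, by simpa [piecesBetween] using hi,
    by simpa [piecesBetween] using hi'⟩

theorem card_piecesBetween_lt (s : ι → ℝ) (i : ι) (u : ℝ) :
    (piecesBetween s (s i) u).card < Fintype.card ι :=
  Finset.card_lt_univ_of_notMem (x := i) (by simp [piecesBetween])

theorem palb_step {f : ℝ → ℝ} (hG : ∀ x, ∃ i, IsGreatest (SubdifferentialAt f x) (s i))
    (hL : ∀ x, ∃ i, IsLeast (SubdifferentialAt f x) (s i)) {a b ξ a' b' : ℝ}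
    (ha : sSup (SubdifferentialAt f a) < 0) (hb : 0 < sInf (SubdifferentialAt f b))
    (hξ : f a + sSup (SubdifferentialAt f a) * (ξ - a) =
      f b + sInf (SubdifferentialAt f b) * (ξ - b))
    (hstop : 0 ∉ SubdifferentialAt f ξ)
    (ha' : a' = if sSup (SubdifferentialAt f ξ) < 0 then ξ else a)
    (hb' : b' = if 0 < sInf (SubdifferentialAt f ξ) then ξ else b) :
    sSup (SubdifferentialAt f a') < 0 ∧ 0 < sInf (SubdifferentialAt f b') ∧
      piecesBetween s (sSup (SubdifferentialAt f a')) (sInf (SubdifferentialAt f b')) ⊂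
        piecesBetween s (sSup (SubdifferentialAt f a)) (sInf (SubdifferentialAt f b)) := by
  obtain ⟨p, hp⟩ := hG a
  obtain ⟨q, hq⟩ := hL b
  obtain ⟨i, hi⟩ := hG ξ
  obtain ⟨j, hj⟩ := hL ξ
  rw [hp.csSup_eq] at ha hξ ⊢
  rw [hq.csInf_eq] at hb hξ ⊢
  rw [hi.csSup_eq] at ha'
  rw [hj.csInf_eq] at hb'
  have hji : s j ≤ s i := hi.2 hj.1
  by_cases hneg : s i < 0
  · have hpi : s p < s i := lt_of_isGreatest_subdifferentialAt_of_crossing hp.1 hq.1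
      (by linarith) hξ hi
    rw [if_pos hneg] at ha'
    rw [if_neg (by linarith)] at hb'
    subst ha' hb'
    rw [hi.csSup_eq, hq.csInf_eq]
    exact ⟨hneg, hb, piecesBetween_ssubset hpi.le le_rfl ⟨hpi, by linarith⟩ (by simp)⟩
  · have hpos : 0 < s j := by
      by_contra! hj0
      exact hstop <|
        (convex_subdifferentialAt f ξ).ordConnected.out hj.1 hi.1 ⟨hj0, by linarith⟩
    have hjq : s j < s q := lt_of_isLeast_subdifferentialAt_of_crossing hp.1 hq.1
      (by linarith) hξ hj
    rw [if_neg hneg] at ha'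
    rw [if_pos hpos] at hb'
    subst ha' hb'
    rw [hp.csSup_eq, hj.csInf_eq]
    exact ⟨ha, hpos, piecesBetween_ssubset le_rfl hjq.le ⟨by linarith, hjq⟩ (by simp)⟩

end PALB

theorem stmt_14_general {ι : Type*} [Fintype ι] [Nonempty ι]
    (s c : ι → ℝ) (f : ℝ → ℝ)
    (hfdef : ∀ x : ℝ, f x = Finset.univ.sup' Finset.univ_nonempty (fun i => s i * x + c i))
    (a b ξ : ℕ → ℝ)
    (hga0 : sSup (SubdifferentialAt f (a 0)) < 0)
    (hgb0 : 0 < sInf (SubdifferentialAt f (b 0)))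
    (hξ : ∀ k : ℕ,
      f (a k) + sSup (SubdifferentialAt f (a k)) * (ξ k - a k) =
        f (b k) + sInf (SubdifferentialAt f (b k)) * (ξ k - b k))
    (ha : ∀ k : ℕ, a (k + 1) = if sSup (SubdifferentialAt f (ξ k)) < 0 then ξ k else a k)
    (hb : ∀ k : ℕ, b (k + 1) = if 0 < sInf (SubdifferentialAt f (ξ k)) then ξ k else b k) :
    ∃ k < Fintype.card ι, 0 ∈ SubdifferentialAt f (ξ k) := by
  have hG := exists_isGreatest_subdifferentialAt_of_eq_sup' hfdef
  have hL := exists_isLeast_subdifferentialAt_of_eq_sup' hfdef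
  by_contra! hstop
  set P : ℕ → Finset ι := fun k =>
    piecesBetween s (sSup (SubdifferentialAt f (a k))) (sInf (SubdifferentialAt f (b k)))
  have hrun : ∀ k ≤ Fintype.card ι, sSup (SubdifferentialAt f (a k)) < 0 ∧
      0 < sInf (SubdifferentialAt f (b k)) ∧ (P k).card + k ≤ (P 0).card := by
    intro k
    induction k with
    | zero => exact fun _ => ⟨hga0, hgb0, le_rfl⟩
    | succ k ih =>
      intro hk
      obtain ⟨hak, hbk, hcard⟩ := ih (by omega)
      obtain ⟨ha', hb', hP⟩ :=
        palb_step hG hL hak hbk (hξ k) (hstop k (by omega)) (ha k) (hb k)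
      have : (P (k + 1)).card < (P k).card := Finset.card_lt_card hP
      exact ⟨ha', hb', by omega⟩
  obtain ⟨i, hi⟩ := hG (a 0)
  have hP0 : (P 0).card < Fintype.card ι := by
    simpa only [P, hi.csSup_eq] using card_piecesBetween_lt s i _
  have := (hrun _ le_rfl).2.2
  omega

theorem stmt_14 {ι : Type*} [Fintype ι] [Nonempty ι]
    (s c : ι → ℝ) (f : ℝ → ℝ)
    (hfdef : ∀ x : ℝ, f x = Finset.univ.sup' Finset.univ_nonempty (fun i => s i * x + c i))
    (a b ξ : ℕ → ℝ)
    (h0 : a 0 < b 0)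
    (hga0 : sSup (SubdifferentialAt f (a 0)) < 0)
    (hgb0 : 0 < sInf (SubdifferentialAt f (b 0)))
    (hξ : ∀ k : ℕ,
      f (a k) + sSup (SubdifferentialAt f (a k)) * (ξ k - a k) =
        f (b k) + sInf (SubdifferentialAt f (b k)) * (ξ k - b k))
    (ha : ∀ k : ℕ, a (k + 1) = if sSup (SubdifferentialAt f (ξ k)) < 0 then ξ k else a k)
    (hb : ∀ k : ℕ, b (k + 1) = if 0 < sInf (SubdifferentialAt f (ξ k)) then ξ k else b k) :
    ∃ k < Fintype.card ι, 0 ∈ SubdifferentialAt f (ξ k) :=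
  stmt_14_general s c f hfdef a b ξ hga0 hgb0 hξ ha hb
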